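/- Suppose σ_k ⇀ σ* weakly in H¹(Ω), σ_k → σ* a.e. in Ω with c₀ ≤ σ_k ≤ c₁, where σ_k successively minimize functionals J_{ε,k} over nested sets 𝒜̃_k whose union is dense in 𝒜̃_∞, and suppose ‖U(σ_k) − U^δ‖² → ‖U(σ*) − U^δ‖² and ∫W(σ_k) → ∫W(σ*); if additionally lim_k J_{ε,k}(σ_k) = J_{ε,∞}(σ*) (i.e., σ* is the limiting minimizer), then ‖∇σ_k‖²_{L²(Ω)} → ‖∇σ*‖²_{L²(Ω)}, and consequently σ_k → σ* strongly in H¹(Ω). -/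

import Mathlib

/-!
Every term of `J_{ε,k}(σ_k)` other than the gradient term converges to its counterpart in
`J_{ε,∞}(σ*)`, so convergence of the functional values forces `‖Dσ_k‖² → ‖Dσ*‖²`. Together with
`Pσ_k → Pσ*` this gives `‖σ_k‖ → ‖σ*‖`, and weak convergence plus convergence of norms is strong
convergence in an inner product space (Radon–Riesz), since
`‖σ_k - σ*‖² = ‖σ_k‖² - 2⟪σ*, σ_k⟫ + ‖σ*‖²`.
-/

open Filter Topology
open scoped RealInnerProductSpace

theorem Filter.Tendsto.of_add_mul_add {ι : Type*} {l : Filter ι} {a b x : ι → ℝ}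
    {a₀ b₀ x₀ c : ℝ} (hc : c ≠ 0) (ha : Tendsto a l (𝓝 a₀)) (hb : Tendsto b l (𝓝 b₀))
    (h : Tendsto (fun k => a k + c * x k + b k) l (𝓝 (a₀ + c * x₀ + b₀))) :
    Tendsto x l (𝓝 x₀) := by
  have hx := (tendsto_const_nhds (x := c⁻¹)).mul ((h.sub ha).sub hb)
  convert hx using 2 <;> field_simp <;> ring

theorem tendsto_norm_sub_of_tendsto_inner_of_tendsto_norm_sq {ι E : Type*} {l : Filter ι}
    [NormedAddCommGroup E] [InnerProductSpace ℝ E] {u : ι → E} {x : E}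
    (hinner : Tendsto (fun k => ⟪x, u k⟫) l (𝓝 ⟪x, x⟫))
    (hnorm : Tendsto (fun k => ‖u k‖ ^ 2) l (𝓝 (‖x‖ ^ 2))) :
    Tendsto (fun k => ‖u k - x‖) l (𝓝 0) := by
  have hsq : Tendsto (fun k => ‖u k - x‖ ^ 2) l (𝓝 0) := by
    have h := (hnorm.sub (hinner.const_mul 2)).add_const (‖x‖ ^ 2)
    rw [real_inner_self_eq_norm_sq] at h
    convert h using 1
    · ext k; rw [norm_sub_sq_real, real_inner_comm]
    · ring_nf
  simpa using hsq.sqrt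

theorem gradient_norm_and_strong_convergence_general
    {X Y Z : Type*} [NormedAddCommGroup X] [InnerProductSpace ℝ X]
    [NormedAddCommGroup Y] [InnerProductSpace ℝ Y]
    [NormedAddCommGroup Z] [InnerProductSpace ℝ Z]
    (P : X →L[ℝ] Z) (D : X →L[ℝ] Y)
    (hnorm : ∀ x : X, ‖x‖ ^ 2 = ‖P x‖ ^ 2 + ‖D x‖ ^ 2)
    (σ : ℕ → X) (σstar : X)
    (hweak : ∀ f : X →L[ℝ] ℝ, Tendsto (fun k => f (σ k)) atTop (nhds (f σstar)))
    (hP : Tendsto (fun k => P (σ k)) atTop (nhds (P σstar)))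
    (αt ε : ℝ) (hα : 0 < αt) (hε : 0 < ε)
    (fid : ℕ → ℝ) (fidstar : ℝ) (w : ℕ → ℝ) (wstar : ℝ)
    (hfid : Tendsto fid atTop (nhds fidstar))
    (hw : Tendsto w atTop (nhds wstar))
    (hJ : Tendsto (fun k => fid k + (αt / 2) * (ε * ‖D (σ k)‖ ^ 2 + ε⁻¹ * w k)) atTop
      (nhds (fidstar + (αt / 2) * (ε * ‖D σstar‖ ^ 2 + ε⁻¹ * wstar)))) :
    Tendsto (fun k => ‖D (σ k)‖ ^ 2) atTop (nhds (‖D σstar‖ ^ 2)) ∧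
    Tendsto (fun k => ‖σ k - σstar‖) atTop (nhds 0) := by
  have hD : Tendsto (fun k => ‖D (σ k)‖ ^ 2) atTop (𝓝 (‖D σstar‖ ^ 2)) := by
    refine hfid.of_add_mul_add (c := αt / 2 * ε) (by positivity)
      ((hw.const_mul ε⁻¹).const_mul (αt / 2)) ?_
    convert hJ using 2 <;> ring
  have hnorm_sq : Tendsto (fun k => ‖σ k‖ ^ 2) atTop (𝓝 (‖σstar‖ ^ 2)) := by
    simpa only [hnorm] using (hP.norm.pow 2).add hD
  exact ⟨hD, tendsto_norm_sub_of_tendsto_inner_of_tendsto_norm_sq (hweak (innerSL ℝ σstar))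
    hnorm_sq⟩

/-- abstract form of Theorem 5.3. `X` plays the role of `H¹(Ω)`,
`P` the `L²(Ω)`-part and `D` the gradient part of the norm,
`‖σ‖² = ‖Pσ‖² + ‖Dσ‖²`. If `σ_k ⇀ σ*` weakly, `Pσ_k → Pσ*` strongly (from a.e.
convergence/compact embedding), the fidelity and double-well terms of the
functionals converge, and the functional values `J_{ε,k}(σ_k)` converge to
`J_{ε,∞}(σ*)`, then `‖Dσ_k‖² → ‖Dσ*‖²` and `σ_k → σ*` strongly. -/
theorem gradient_norm_and_strong_convergence
    {X Y Z : Type*} [NormedAddCommGroup X] [InnerProductSpace ℝ X] [CompleteSpace X]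
    [NormedAddCommGroup Y] [InnerProductSpace ℝ Y] [CompleteSpace Y]
    [NormedAddCommGroup Z] [InnerProductSpace ℝ Z] [CompleteSpace Z]
    (P : X →L[ℝ] Z) (D : X →L[ℝ] Y)
    (hnorm : ∀ x : X, ‖x‖ ^ 2 = ‖P x‖ ^ 2 + ‖D x‖ ^ 2)
    (σ : ℕ → X) (σstar : X)
    (hweak : ∀ f : X →L[ℝ] ℝ, Tendsto (fun k => f (σ k)) atTop (nhds (f σstar)))
    (hP : Tendsto (fun k => P (σ k)) atTop (nhds (P σstar)))
    (αt ε : ℝ) (hα : 0 < αt) (hε : 0 < ε)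
    (fid : ℕ → ℝ) (fidstar : ℝ) (w : ℕ → ℝ) (wstar : ℝ)
    (hfid : Tendsto fid atTop (nhds fidstar))
    (hw : Tendsto w atTop (nhds wstar))
    (hJ : Tendsto (fun k => fid k + (αt / 2) * (ε * ‖D (σ k)‖ ^ 2 + ε⁻¹ * w k)) atTop
      (nhds (fidstar + (αt / 2) * (ε * ‖D σstar‖ ^ 2 + ε⁻¹ * wstar)))) :
    Tendsto (fun k => ‖D (σ k)‖ ^ 2) atTop (nhds (‖D σstar‖ ^ 2)) ∧
    Tendsto (fun k => ‖σ k - σstar‖) atTop (nhds 0) :=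
  gradient_norm_and_strong_convergence_general P D hnorm σ σstar hweak hP αt ε hα hε fid fidstar w
    wstar hfid hw hJ
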